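/- arXiv:math/0104188 — 2 statements merged into one kernel-verified Lean document; each statement's English description precedes it below -/
import Mathlib

section
/- Let X₁ and X₂ be right Hilbert C*-modules over a C*-algebra A and let S : X₁ → X₂ be a surjective linear isometry which is an A-module map, i.e. S(xa) = S(x)a for all x ∈ X₁ and a ∈ A. Then S preserves the inner product: ⟨Sx, Sy⟩₂ = ⟨x, y⟩₁ for all x, y ∈ X₁. -/
open scoped ComplexOrder

variable {H : Type*} [NormedAddCommGroup H] [InnerProductSpace ℂ H] [CompleteSpace H]
variable {K : Type*} [NormedAddCommGroup K] [InnerProductSpace ℂ K] [CompleteSpace K]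

/-- `x` is a (self-adjoint) projection belonging to the von Neumann algebra `M`. -/
def IsVNProjection (M : VonNeumannAlgebra H) (p : H →L[ℂ] H) : Prop :=
  p ∈ M ∧ p * p = p ∧ star p = p

/-- `z` is a central element of the von Neumann algebra `M`. -/
def IsCentral (M : VonNeumannAlgebra H) (z : H →L[ℂ] H) : Prop :=
  z ∈ M ∧ ∀ y ∈ M, z * y = y * z

/-- The projection `p` has central support `1` in `M`: the only central projection `z`
of `M` with `z * p = p` is `z = 1`. -/
def HasFullCentralSupport (M : VonNeumannAlgebra H) (p : H →L[ℂ] H) : Prop :=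
  ∀ z : H →L[ℂ] H, IsVNProjection M z → IsCentral M z → z * p = p → z = 1

/-- The off-diagonal corner `p M (1 - p)` of a von Neumann algebra `M`, as a complex
subspace of the bounded operators. -/
def offCorner (M : VonNeumannAlgebra H) (p : H →L[ℂ] H) : Submodule ℂ (H →L[ℂ] H) where
  carrier := {x | x ∈ M ∧ p * x * (1 - p) = x}
  add_mem' := by
    rintro x y ⟨hxM, hx⟩ ⟨hyM, hy⟩
    exact ⟨add_mem hxM hyM, by rw [mul_add, add_mul, hx, hy]⟩
  zero_mem' := ⟨zero_mem _, by simp⟩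
  smul_mem' := by
    rintro c x ⟨hxM, hx⟩
    refine ⟨?_, by rw [mul_smul_comm, smul_mul_assoc, hx]⟩
    have : c • x = (algebraMap ℂ (H →L[ℂ] H) c) * x := by
      simp [Algebra.algebraMap_eq_smul_one, smul_mul_assoc]
    rw [this]
    exact mul_mem (M.toStarSubalgebra.algebraMap_mem c) hxM

/-- The corner `e M e` of a von Neumann algebra `M`, as a set of bounded operators. -/
def cornerSet (M : VonNeumannAlgebra H) (e : H →L[ℂ] H) : Set (H →L[ℂ] H) :=
  {x | x ∈ M ∧ e * x * e = x}

/-- `Ψ` restricts to a `*`-isomorphism from the set `S` onto the set `S'`. -/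
structure IsStarIsoOn {H K : Type*} [NormedAddCommGroup H] [InnerProductSpace ℂ H] [CompleteSpace H]
    [NormedAddCommGroup K] [InnerProductSpace ℂ K] [CompleteSpace K]
    (Ψ : (H →L[ℂ] H) → (K →L[ℂ] K)) (S : Set (H →L[ℂ] H)) (S' : Set (K →L[ℂ] K)) : Prop where
  bijOn : Set.BijOn Ψ S S'
  map_add : ∀ x ∈ S, ∀ y ∈ S, Ψ (x + y) = Ψ x + Ψ y
  map_smul : ∀ (c : ℂ), ∀ x ∈ S, Ψ (c • x) = c • Ψ x
  map_mul : ∀ x ∈ S, ∀ y ∈ S, Ψ (x * y) = Ψ x * Ψ y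
  map_star : ∀ x ∈ S, Ψ (star x) = star (Ψ x)

/-- `Φ` restricts to a `*`-antiisomorphism from the set `S` onto the set `S'`. -/
structure IsStarAntiIsoOn {H K : Type*} [NormedAddCommGroup H] [InnerProductSpace ℂ H]
    [CompleteSpace H] [NormedAddCommGroup K] [InnerProductSpace ℂ K] [CompleteSpace K]
    (Φ : (H →L[ℂ] H) → (K →L[ℂ] K)) (S : Set (H →L[ℂ] H)) (S' : Set (K →L[ℂ] K)) : Prop where
  bijOn : Set.BijOn Φ S S'
  map_add : ∀ x ∈ S, ∀ y ∈ S, Φ (x + y) = Φ x + Φ y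
  map_smul : ∀ (c : ℂ), ∀ x ∈ S, Φ (c • x) = c • Φ x
  map_mul : ∀ x ∈ S, ∀ y ∈ S, Φ (x * y) = Φ y * Φ x
  map_star : ∀ x ∈ S, Φ (star x) = star (Φ x)

/-- `r` is the supremum, in the projection lattice of the von Neumann algebra `M`, of the
family of projections `f`: it is a projection in `M` dominating every `f i`, and it
vanishes on every vector annihilated by all the `f i`. -/
def IsProjSup {H : Type*} [NormedAddCommGroup H] [InnerProductSpace ℂ H] [CompleteSpace H]
    {ι : Sort*} (M : VonNeumannAlgebra H) (r : H →L[ℂ] H) (f : ι → (H →L[ℂ] H)) : Prop :=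
  IsVNProjection M r ∧ (∀ i, r * f i = f i) ∧ ∀ v : H, (∀ i, f i v = 0) → r v = 0

/-- `r₀` is the infimum, in the projection lattice of the von Neumann algebra `M`, of the
family of projections `f`: it is a projection in `M` dominated by every `f i`, and it fixes
every vector fixed by all the `f i`. -/
def IsProjInf {H : Type*} [NormedAddCommGroup H] [InnerProductSpace ℂ H] [CompleteSpace H]
    {ι : Sort*} (M : VonNeumannAlgebra H) (r₀ : H →L[ℂ] H) (f : ι → (H →L[ℂ] H)) : Prop :=
  IsVNProjection M r₀ ∧ (∀ i, f i * r₀ = r₀) ∧ ∀ v : H, (∀ i, f i v = v) → r₀ v = v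


/-- The Hilbert C⋆-module class `CStarModule` as it stood in Mathlib of December 2024 (a right
`A`-module through `Aᵐᵒᵖ`, with `⟪x, y <• a⟫ = ⟪x, y⟫ * a`); Mathlib's `CStarModule` is now a left
module with another axiom, so the old notion is spelled out here under a new name. -/
class RightCStarModule (A : outParam Type*) (E : Type*) [NonUnitalSemiring A] [StarRing A]
    [Module ℂ A] [AddCommGroup E] [Module ℂ E] [PartialOrder A] [SMul Aᵐᵒᵖ E] [Norm A] [Norm E]
    extends Inner A E where
  inner_add_right {x} {y} {z} : inner x (y + z) = inner x y + inner x z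
  inner_self_nonneg {x} : 0 ≤ inner x x
  inner_self {x} : inner x x = 0 ↔ x = 0
  inner_op_smul_right {a : A} {x y : E} : inner x (MulOpposite.op a • y) = inner x y * a
  inner_smul_right_complex {z : ℂ} {x} {y} : inner x (z • y) = z • inner x y
  star_inner x y : star (inner x y) = inner y x
  norm_eq_sqrt_norm_inner_self x : ‖x‖ = √‖inner x x‖

/-! The inner product is recovered from its diagonal by polarization, so it suffices to show
`⟪S w, S w⟫ = ⟪w, w⟫`. Letting the unitization `A⁺¹` act on the right of a module, one has
`⟪w • a, w • a⟫ = a⋆ ⟪w, w⟫ a`; since `S` commutes with this action and preserves norms,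
`‖a⋆ ⟪S w, S w⟫ a‖ = ‖a⋆ ⟪w, w⟫ a‖` for all `a ∈ A⁺¹`. In a unital C⋆-algebra such a norm
comparison orders positive elements: conjugating by `a = (b + ε)^(-1/2)` gives `‖a⋆ c a‖ ≤ 1`,
hence `c ≤ b + ε`, and one lets `ε → 0`. -/

theorem LinearMap.eq_zero_of_forall_apply_self_eq_zero {M N : Type*} [AddCommGroup M] [Module ℂ M]
    [AddCommGroup N] [Module ℂ N] {D : M →ₗ⋆[ℂ] M →ₗ[ℂ] N} (hD : ∀ x, D x x = 0) : D = 0 := by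
  ext x y
  have hsum : D x y + D y x = 0 := by
    simpa [hD] using hD (x + y)
  have hdiff : Complex.I • (D x y - D y x) = 0 := by
    simpa [hD, smul_sub, ← sub_eq_add_neg] using hD (x + Complex.I • y)
  rw [smul_eq_zero, sub_eq_zero] at hdiff
  have htwo : (2 : ℂ) • D x y = 0 := by
    rw [two_smul]
    nth_rewrite 2 [hdiff.resolve_left Complex.I_ne_zero]
    exact hsum
  simpa using htwo

open CFC in
lemma CStarAlgebra.le_add_algebraMap_of_norm_conjugate_le {B : Type*} [CStarAlgebra B]
    [PartialOrder B] [StarOrderedRing B] {b c : B} (hb : 0 ≤ b) (hc : IsSelfAdjoint c)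
    (h : ∀ a : B, ‖star a * c * a‖ ≤ ‖star a * b * a‖) {ε : ℝ} (hε : 0 < ε) :
    c ≤ b + algebraMap ℝ B ε := by
  set d := b + algebraMap ℝ B ε
  have hεpos : IsStrictlyPositive (algebraMap ℝ B ε) := isStrictlyPositive_algebraMap hε
  have hd : IsStrictlyPositive d := hεpos.nonneg_add hb
  set u := d ^ (-(1 / 2) : ℝ)
  have hu : IsSelfAdjoint u := .of_nonneg rpow_nonneg
  have hdu : star u * d * u = 1 := by rw [hu.star_eq]; exact conjugate_rpow_neg_one_half d
  have hbu : ‖star u * b * u‖ ≤ 1 := by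
    rw [CStarAlgebra.norm_le_one_iff_of_nonneg _ (star_left_conjugate_nonneg hb u), ← hdu]
    exact star_left_conjugate_le_conjugate (le_add_of_nonneg_right hεpos.nonneg) u
  have hcu : star u * c * u ≤ star u * d * u := calc
    star u * c * u ≤ algebraMap ℝ B ‖star u * c * u‖ :=
      (hc.conjugate' u).le_algebraMap_norm_self
    _ ≤ algebraMap ℝ B 1 := algebraMap_mono B ((h u).trans hbu)
    _ = star u * d * u := by rw [map_one, hdu]
  rwa [← sub_nonneg, ← sub_mul, ← mul_sub,
    (IsStrictlyPositive.rpow d _ hd).isUnit.star_left_conjugate_nonneg_iff, sub_nonneg] at hcu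

open Filter Topology in
lemma CStarAlgebra.le_of_norm_conjugate_le {B : Type*} [CStarAlgebra B]
    [PartialOrder B] [StarOrderedRing B] {b c : B} (hb : 0 ≤ b) (hc : IsSelfAdjoint c)
    (h : ∀ a : B, ‖star a * c * a‖ ≤ ‖star a * b * a‖) : c ≤ b := by
  have hlim : Tendsto (fun ε : ℝ => b + algebraMap ℝ B ε) (𝓝[>] 0) (𝓝 b) := by
    simpa using (((continuous_algebraMap ℝ B).tendsto 0).const_add b).mono_left
      nhdsWithin_le_nhds
  exact ge_of_tendsto hlim <| eventually_nhdsWithin_of_forall fun _ hε =>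
    le_add_algebraMap_of_norm_conjugate_le hb hc h hε

open scoped CStarAlgebra in
lemma CStarAlgebra.le_of_norm_inr_conjugate_le {A : Type*} [NonUnitalCStarAlgebra A]
    [PartialOrder A] [StarOrderedRing A] {b c : A} (hb : 0 ≤ b) (hc : IsSelfAdjoint c)
    (h : ∀ a : A⁺¹, ‖star a * (c : A⁺¹) * a‖ ≤ ‖star a * (b : A⁺¹) * a‖) : c ≤ b :=
  (Unitization.inr_le_iff c b hc (.of_nonneg hb)).mp <|
    le_of_norm_conjugate_le (Unitization.inr_nonneg_iff.mpr hb) (hc.inr (R := ℂ)) h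

namespace RightCStarModule

section

variable {A E : Type*} [NonUnitalRing A] [StarRing A] [Module ℂ A] [PartialOrder A] [Norm A]
  [AddCommGroup E] [Module ℂ E] [Norm E] [SMul Aᵐᵒᵖ E] [RightCStarModule A E]

lemma inner_add_left {x y z : E} : inner A (x + y) z = inner A x z + inner A y z := by
  rw [← star_inner z, inner_add_right, star_add, star_inner, star_inner]

lemma inner_smul_left_complex [StarModule ℂ A] {c : ℂ} {x y : E} :
    inner A (c • x) y = star c • inner A x y := by
  rw [← star_inner y, inner_smul_right_complex, star_smul, star_inner]

lemma inner_op_smul_left {a : A} {x y : E} :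
    inner A (MulOpposite.op a • x) y = star a * inner A x y := by
  rw [← star_inner y, inner_op_smul_right, star_mul, star_inner]

variable (A E) in
def innerₛₗ [StarModule ℂ A] : E →ₗ⋆[ℂ] E →ₗ[ℂ] A :=
  LinearMap.mk₂'ₛₗ _ _ (fun x y => inner A x y) (fun _ _ _ => inner_add_left)
    (fun _ _ _ => inner_smul_left_complex) (fun _ _ _ => inner_add_right)
    (fun _ _ _ => inner_smul_right_complex)

@[simp]
lemma innerₛₗ_apply [StarModule ℂ A] {x y : E} : innerₛₗ A E x y = inner A x y := rfl

open scoped RightActions in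
lemma inr_inner_self_fst_smul_add_snd_smul [StarModule ℂ A] [IsScalarTower ℂ A A]
    [SMulCommClass ℂ A A] (v : E) (a : Unitization ℂ A) :
    ((inner A (a.fst • v + v <• a.snd) (a.fst • v + v <• a.snd) : A) : Unitization ℂ A) =
      star a * (inner A v v : A) * a := by
  conv_rhs => rw [← Unitization.inl_fst_add_inr_snd_eq a]
  simp only [← Unitization.algebraMap_eq_inl, Algebra.algebraMap_eq_smul_one,
    inner_add_left, inner_add_right, inner_smul_left_complex, inner_smul_right_complex,
    inner_op_smul_left, inner_op_smul_right,
    star_add, star_smul, star_one, ← Unitization.inr_star,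
    add_mul, mul_add, Unitization.inr_mul, Unitization.inr_add, Unitization.inr_smul,
    smul_mul_assoc, mul_smul_comm, one_mul, mul_one]

end

section

variable {A E F : Type*} [NonUnitalCStarAlgebra A] [PartialOrder A]
  [AddCommGroup E] [Module ℂ E] [Norm E] [SMul Aᵐᵒᵖ E] [RightCStarModule A E]
  [AddCommGroup F] [Module ℂ F] [Norm F] [SMul Aᵐᵒᵖ F] [RightCStarModule A F]

lemma norm_sq_eq (x : E) : ‖x‖ ^ 2 = ‖inner A x x‖ := by
  rw [norm_eq_sqrt_norm_inner_self (A := A), Real.sq_sqrt (norm_nonneg _)]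

open scoped CStarAlgebra RightActions in
lemma inner_self_map_of_norm_map [StarOrderedRing A] (S : E →ₗ[ℂ] F) (hS : ∀ x, ‖S x‖ = ‖x‖)
    (hmod : ∀ x (a : A), S (x <• a) = S x <• a) (w : E) :
    inner A (S w) (S w) = inner A w w := by
  have hconj (a : A⁺¹) :
      ‖star a * (inner A (S w) (S w) : A⁺¹) * a‖ = ‖star a * (inner A w w : A⁺¹) * a‖ := by
    rw [← inr_inner_self_fst_smul_add_snd_smul, ← inr_inner_self_fst_smul_add_snd_smul,
      Unitization.norm_inr, Unitization.norm_inr, ← norm_sq_eq, ← norm_sq_eq, ← hS,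
      map_add, map_smul, hmod]
  exact le_antisymm
    (CStarAlgebra.le_of_norm_inr_conjugate_le inner_self_nonneg (.of_nonneg inner_self_nonneg)
      fun a => (hconj a).le)
    (CStarAlgebra.le_of_norm_inr_conjugate_le inner_self_nonneg (.of_nonneg inner_self_nonneg)
      fun a => (hconj a).ge)

end

end RightCStarModule

theorem isometric_module_map_preserves_inner_general
    {A : Type*} [NonUnitalCStarAlgebra A] [PartialOrder A] [StarOrderedRing A]
    {X₁ : Type*} [NormedAddCommGroup X₁] [NormedSpace ℂ X₁] [SMul Aᵐᵒᵖ X₁]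
    [RightCStarModule A X₁]
    {X₂ : Type*} [NormedAddCommGroup X₂] [NormedSpace ℂ X₂] [SMul Aᵐᵒᵖ X₂]
    [RightCStarModule A X₂]
    (S : X₁ ≃ₗᵢ[ℂ] X₂)
    (hmod : ∀ (x : X₁) (a : A), S (MulOpposite.op a • x) = MulOpposite.op a • S x)
    (x y : X₁) :
    (inner A (S x) (S y) : A) = inner A x y := by
  open RightCStarModule in
  have hdiag : ∀ w, inner A (S w) (S w) = inner A w w :=
    inner_self_map_of_norm_map (S : X₁ →ₗ[ℂ] X₂) S.norm_map hmod
  have hsesq : ((innerₛₗ A X₂).comp (S : X₁ →ₗ[ℂ] X₂)).compl₂ (S : X₁ →ₗ[ℂ] X₂) = innerₛₗ A X₁ :=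
    sub_eq_zero.mp <| LinearMap.eq_zero_of_forall_apply_self_eq_zero fun w => by
      simpa [sub_eq_zero] using hdiag w
  exact LinearMap.congr_fun₂ hsesq x y

theorem isometric_module_map_preserves_inner
    {A : Type*} [NonUnitalCStarAlgebra A] [PartialOrder A] [StarOrderedRing A]
    {X₁ : Type*} [NormedAddCommGroup X₁] [NormedSpace ℂ X₁] [SMul Aᵐᵒᵖ X₁]
    [RightCStarModule A X₁] [CompleteSpace X₁]
    {X₂ : Type*} [NormedAddCommGroup X₂] [NormedSpace ℂ X₂] [SMul Aᵐᵒᵖ X₂]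
    [RightCStarModule A X₂] [CompleteSpace X₂]
    (S : X₁ ≃ₗᵢ[ℂ] X₂)
    (hmod : ∀ (x : X₁) (a : A), S (MulOpposite.op a • x) = MulOpposite.op a • S x)
    (x y : X₁) :
    (inner A (S x) (S y) : A) = inner A x y :=
  isometric_module_map_preserves_inner_general S hmod x y
end

section
/- Let T : pM(1−p) → qN(1−q) be a surjective linear isometry, let u be a partial isometry in pM(1−p), set v = T(u), and let e ∈ N be a projection with e ≤ vv*. Then there exists a projection e₀ ∈ M with e₀ ≤ uu* such that T(e₀u) = ev (equivalently, T⁻¹(ev) = e₀u). -/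
open scoped ComplexOrder

variable {H : Type*} [NormedAddCommGroup H] [InnerProductSpace ℂ H] [CompleteSpace H]
variable {K : Type*} [NormedAddCommGroup K] [InnerProductSpace ℂ K] [CompleteSpace K]

set_option linter.unusedSectionVars false
set_option maxHeartbeats 1000000

noncomputable section

namespace SubprojAux

open ContinuousLinearMap

variable {E : Type*} [NormedAddCommGroup E] [InnerProductSpace ℂ E] [CompleteSpace E]

local notation "⟪" x ", " y "⟫" => @inner ℂ _ _ x y

lemma inner_op_move (x : E →L[ℂ] E) (ξ η : E) :
    ⟪x ξ, η⟫ = ⟪ξ, (star x) η⟫ := by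
  rw [ContinuousLinearMap.star_eq_adjoint]
  exact (ContinuousLinearMap.adjoint_inner_right x ξ η).symm

lemma norm_apply_sq (x : E →L[ℂ] E) (ξ : E) :
    ‖x ξ‖ ^ 2 = RCLike.re ⟪ξ, (star x * x) ξ⟫ := by
  have h : ⟪x ξ, x ξ⟫ = ⟪ξ, (star x * x) ξ⟫ := by
    rw [ContinuousLinearMap.mul_apply]
    exact inner_op_move x ξ (x ξ)
  rw [← h, inner_self_eq_norm_sq]

lemma norm_op_le_one {x : E →L[ℂ] E} (h : ∀ ξ : E, ‖x ξ‖ ^ 2 ≤ ‖ξ‖ ^ 2) : ‖x‖ ≤ 1 := by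
  refine ContinuousLinearMap.opNorm_le_bound x zero_le_one fun ξ => ?_
  rw [one_mul]
  have := h ξ
  nlinarith [norm_nonneg (x ξ), norm_nonneg ξ]

lemma proj_norm_le_one {e : E →L[ℂ] E} (h2 : e * e = e) (hs : star e = e) : ‖e‖ ≤ 1 := by
  have h := CStarRing.norm_star_mul_self (x := e)
  rw [hs, h2] at h
  nlinarith [norm_nonneg e]

lemma proj_pyth {g : E →L[ℂ] E} (h2 : g * g = g) (hs : star g = g) (ξ : E) :
    ‖ξ‖ ^ 2 = ‖g ξ‖ ^ 2 + ‖ξ - g ξ‖ ^ 2 := by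
  have horth : ⟪g ξ, ξ - g ξ⟫ = 0 := by
    rw [inner_sub_right]
    have h1 : ⟪g ξ, g ξ⟫ = ⟪ξ, g ξ⟫ := by
      have hmv := inner_op_move g ξ (g ξ)
      rw [hs] at hmv
      rw [hmv]
      congr 1
      have hgg : g (g ξ) = (g * g) ξ := rfl
      rw [hgg, h2]
    have h2' : ⟪g ξ, ξ⟫ = ⟪ξ, g ξ⟫ := by
      have hmv := inner_op_move g ξ ξ
      rw [hs] at hmv
      exact hmv
    rw [h1, h2', sub_self]
  have hdecomp : ξ = g ξ + (ξ - g ξ) := by abel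
  calc ‖ξ‖ ^ 2 = ‖g ξ + (ξ - g ξ)‖ ^ 2 := by rw [← hdecomp]
    _ = ‖g ξ‖ ^ 2 + 2 * RCLike.re ⟪g ξ, ξ - g ξ⟫ + ‖ξ - g ξ‖ ^ 2 := norm_add_sq _ _
    _ = ‖g ξ‖ ^ 2 + ‖ξ - g ξ‖ ^ 2 := by rw [horth]; simp

section PartialIsometry

variable {s : E →L[ℂ] E}

lemma pi_sg (hs : s * star s * s = s) : s * (star s * s) = s := by
  rw [← mul_assoc]; exact hs

lemma pi_g_idem (hs : s * star s * s = s) :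
    (star s * s) * (star s * s) = star s * s := by
  calc (star s * s) * (star s * s) = star s * (s * star s * s) := by noncomm_ring
    _ = star s * s := by rw [hs]

lemma pi_g_sa : star (star s * s) = star s * s := by
  rw [star_mul, star_star]

lemma pi_e_idem (hs : s * star s * s = s) :
    (s * star s) * (s * star s) = s * star s := by
  calc (s * star s) * (s * star s) = (s * star s * s) * star s := by noncomm_ring
    _ = s * star s := by rw [hs]

lemma pi_e_sa : star (s * star s) = s * star s := by
  rw [star_mul, star_star]

lemma pi_norm_le_one (hs : s * star s * s = s) : ‖s‖ ≤ 1 := by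
  have hx : ‖star s * s‖ ≤ 1 := proj_norm_le_one (pi_g_idem hs) pi_g_sa
  have h := CStarRing.norm_star_mul_self (x := s)
  nlinarith [norm_nonneg s]

lemma pi_star (hs : s * star s * s = s) : star s * s * star s = star s := by
  have := congrArg star hs
  rwa [star_mul, star_mul, star_star, ← mul_assoc] at this

/-- on the initial space, `s` is isometric -/
lemma pi_apply_norm (hs : s * star s * s = s) (ξ : E) :
    ‖s ((star s * s) ξ)‖ ^ 2 = ‖(star s * s) ξ‖ ^ 2 := by
  rw [norm_apply_sq s ((star s * s) ξ)]
  have h1 : (star s * s) ((star s * s) ξ) = (star s * s) ξ := by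
    have h : (star s * s) ((star s * s) ξ) = ((star s * s) * (star s * s)) ξ := rfl
    rw [h, pi_g_idem hs]
  rw [h1, inner_self_eq_norm_sq]

/-- Strict convexity: if `m₁ + m₂ = s + s` with `mᵢ` contractions and `s` a partial
isometry, then `mᵢ` agree with `s` on the initial space of `s`. -/
lemma midpoint_eq_on_initial {m₁ m₂ : E →L[ℂ] E} (hs : s * star s * s = s)
    (h1 : ‖m₁‖ ≤ 1) (h2 : ‖m₂‖ ≤ 1) (hsum : m₁ + m₂ = s + s) :
    m₁ * (star s * s) = s ∧ m₂ * (star s * s) = s := by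
  have key : ∀ ξ : E, m₁ ((star s * s) ξ) = s ((star s * s) ξ) ∧
      m₂ ((star s * s) ξ) = s ((star s * s) ξ) := by
    intro ξ
    set η := (star s * s) ξ with hη
    have hsn : ‖s η‖ ^ 2 = ‖η‖ ^ 2 := pi_apply_norm hs ξ
    have hm1 : ‖m₁ η‖ ≤ ‖η‖ := by
      calc ‖m₁ η‖ ≤ ‖m₁‖ * ‖η‖ := m₁.le_opNorm η
        _ ≤ 1 * ‖η‖ := by gcongr
        _ = ‖η‖ := one_mul _
    have hm2 : ‖m₂ η‖ ≤ ‖η‖ := by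
      calc ‖m₂ η‖ ≤ ‖m₂‖ * ‖η‖ := m₂.le_opNorm η
        _ ≤ 1 * ‖η‖ := by gcongr
        _ = ‖η‖ := one_mul _
    have hsum' : m₁ η + m₂ η = s η + s η := by
      have : (m₁ + m₂) η = (s + s) η := by rw [hsum]
      simpa using this
    have hpar := parallelogram_law_with_norm ℂ (m₁ η) (m₂ η)
    have hns : ‖m₁ η + m₂ η‖ = 2 * ‖s η‖ := by
      rw [hsum']
      have : s η + s η = (2 : ℝ) • s η := by
        rw [two_smul]
      rw [this, norm_smul]
      simp
    have hpar' : ‖m₁ η + m₂ η‖ ^ 2 + ‖m₁ η - m₂ η‖ ^ 2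
        = 2 * (‖m₁ η‖ ^ 2 + ‖m₂ η‖ ^ 2) := by
      simpa [pow_two] using hpar
    have hns2 : ‖m₁ η + m₂ η‖ ^ 2 = 4 * ‖η‖ ^ 2 := by
      rw [hns]
      nlinarith [hsn]
    have hZero : ‖m₁ η - m₂ η‖ ^ 2 ≤ 0 := by
      nlinarith [norm_nonneg (m₁ η), norm_nonneg (m₂ η), norm_nonneg η, hm1, hm2]
    have hEq : m₁ η = m₂ η := by
      have : ‖m₁ η - m₂ η‖ = 0 := by
        nlinarith [norm_nonneg (m₁ η - m₂ η)]
      rwa [norm_eq_zero, sub_eq_zero] at this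
    constructor
    · have hadd : m₁ η + m₁ η = s η + s η := by
        nth_rewrite 2 [hEq]
        exact hsum'
      have h2' : (2 : ℝ) • m₁ η = (2 : ℝ) • s η := by
        rw [two_smul, two_smul]; exact hadd
      exact smul_right_injective E (R := ℝ) (by norm_num : (2:ℝ) ≠ 0) h2'
    · have hadd : m₂ η + m₂ η = s η + s η := by
        nth_rewrite 1 [← hEq]
        exact hsum'
      have h2' : (2 : ℝ) • m₂ η = (2 : ℝ) • s η := by
        rw [two_smul, two_smul]; exact hadd
      exact smul_right_injective E (R := ℝ) (by norm_num : (2:ℝ) ≠ 0) h2' 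
  constructor
  · ext ξ
    have h := (key ξ).1
    have hmg : (m₁ * (star s * s)) ξ = m₁ ((star s * s) ξ) := rfl
    rw [hmg, h]
    have hsg : s ((star s * s) ξ) = (s * (star s * s)) ξ := rfl
    rw [hsg, pi_sg hs]
  · ext ξ
    have h := (key ξ).2
    have hmg : (m₂ * (star s * s)) ξ = m₂ ((star s * s) ξ) := rfl
    rw [hmg, h]
    have hsg : s ((star s * s) ξ) = (s * (star s * s)) ξ := rfl
    rw [hsg, pi_sg hs]

/-- Corner lemma, column version: a contraction whose `(ss*, s*s)`-corner equals the
partial isometry `s` is `s` on the whole initial space. -/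
lemma corner_col {y : E →L[ℂ] E} (hy : ‖y‖ ≤ 1) (hs : s * star s * s = s)
    (hc : (s * star s) * y * (star s * s) = s) : y * (star s * s) = s := by
  ext ξ
  set η := (star s * s) ξ with hη
  have hyg : (y * (star s * s)) ξ = y η := rfl
  rw [hyg]
  have hsn : ‖s η‖ ^ 2 = ‖η‖ ^ 2 := pi_apply_norm hs ξ
  have hyn : ‖y η‖ ^ 2 ≤ ‖η‖ ^ 2 := by
    have h := y.le_opNorm η
    have h' : ‖y η‖ ≤ ‖η‖ := by
      calc ‖y η‖ ≤ ‖y‖ * ‖η‖ := h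
        _ ≤ 1 * ‖η‖ := by gcongr
        _ = ‖η‖ := one_mul _
    nlinarith [norm_nonneg (y η), norm_nonneg η]
  -- e := s * star s
  have hdec := proj_pyth (pi_e_idem hs) (pi_e_sa (s := s)) (y η)
  have hcorner : (s * star s) (y η) = s ξ := by
    have h1 : (s * star s) (y η) = ((s * star s) * y * (star s * s)) ξ := rfl
    rw [h1, hc]
  rw [hcorner] at hdec
  have hsξ : s ξ = s η := by
    have h1 : s η = (s * (star s * s)) ξ := rfl
    rw [h1, pi_sg hs]
  rw [hsξ] at hdec
  have hrest : ‖y η - s η‖ ^ 2 ≤ 0 := by nlinarith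
  have : ‖y η - s η‖ = 0 := by nlinarith [norm_nonneg (y η - s η)]
  have hyeq : y η = s η := by rwa [norm_eq_zero, sub_eq_zero] at this
  rw [hyeq, ← hsξ]


/-- Corner lemma, both versions. -/
lemma corner_lemma {y : E →L[ℂ] E} (hy : ‖y‖ ≤ 1) (hs : s * star s * s = s)
    (hc : (s * star s) * y * (star s * s) = s) :
    y * (star s * s) = s ∧ (s * star s) * y = s := by
  refine ⟨corner_col hy hs hc, ?_⟩
  have hs_st : star s * star (star s) * star s = star s := by
    rw [star_star]; exact pi_star hs
  have hc_st : (star s * star (star s)) * star y * (star (star s) * star s) = star s := by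
    rw [star_star]
    have h := congrArg star hc
    simp only [star_mul, star_star] at h
    rw [mul_assoc]
    exact h
  have hcc := corner_col (s := star s) (y := star y) (by rwa [norm_star]) hs_st hc_st
  rw [star_star] at hcc
  have h := congrArg star hcc
  simp only [star_mul, star_star] at h
  exact h

/-- Orthogonal sum of contractions is a contraction. -/
lemma orth_sum_norm {z : E →L[ℂ] E} (hs1 : ‖s‖ ≤ 1) (hz1 : ‖z‖ ≤ 1)
    (hpi : s * star s * s = s) (hsz : star s * z = 0) (hzg : z * (star s * s) = 0) :
    ‖s + z‖ ≤ 1 := by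
  apply norm_op_le_one
  intro ξ
  have happ : (s + z) ξ = s ξ + z ξ := rfl
  rw [happ]
  have hinner : ⟪s ξ, z ξ⟫ = 0 := by
    rw [inner_op_move s ξ (z ξ)]
    have h : (star s) (z ξ) = (star s * z) ξ := rfl
    rw [h, hsz]
    simp
  have hexp : ‖s ξ + z ξ‖ ^ 2 = ‖s ξ‖ ^ 2 + ‖z ξ‖ ^ 2 := by
    rw [norm_add_sq (𝕜 := ℂ), hinner]
    simp
  have hsb : ‖s ξ‖ ≤ ‖(star s * s) ξ‖ := by
    have h1 : s ξ = s ((star s * s) ξ) := by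
      have h : s ((star s * s) ξ) = (s * (star s * s)) ξ := rfl
      rw [h, pi_sg hpi]
    rw [h1]
    calc ‖s ((star s * s) ξ)‖ ≤ ‖s‖ * ‖(star s * s) ξ‖ := s.le_opNorm _
      _ ≤ 1 * _ := by gcongr
      _ = _ := one_mul _
  have hzb : ‖z ξ‖ ≤ ‖ξ - (star s * s) ξ‖ := by
    have h1 : z ξ = z (ξ - (star s * s) ξ) := by
      rw [map_sub]
      have h : z ((star s * s) ξ) = (z * (star s * s)) ξ := rfl
      rw [h, hzg]
      simp
    rw [h1]
    calc ‖z (ξ - (star s * s) ξ)‖ ≤ ‖z‖ * ‖ξ - (star s * s) ξ‖ := z.le_opNorm _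
      _ ≤ 1 * _ := by gcongr
      _ = _ := one_mul _
  have hp := proj_pyth (pi_g_idem hpi) (pi_g_sa (s := s)) ξ
  nlinarith [norm_nonneg (s ξ), norm_nonneg (z ξ), norm_nonneg (ξ - (star s * s) ξ),
    norm_nonneg ((star s * s) ξ)]

end PartialIsometry

/-- If `P * f * P = P` for projections `f, P`, then `f` dominates `P`. -/
lemma proj_absorb {f P : E →L[ℂ] E} (hf2 : f * f = f) (hfs : star f = f)
    (hP2 : P * P = P) (hPs : star P = P) (h : P * f * P = P) : f * P = P := by
  ext ξ
  have hfP : (f * P) ξ = f (P ξ) := rfl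
  rw [hfP]
  have hPP : P (P ξ) = P ξ := by
    have h' : P (P ξ) = (P * P) ξ := rfl
    rw [h', hP2]
  have hB : ⟪P ξ, f (P ξ)⟫ = ⟪ξ, P ξ⟫ := by
    have hmv := inner_op_move P ξ (f (P ξ))
    rw [hPs] at hmv
    rw [hmv]
    congr 1
    have h' : P (f (P ξ)) = (P * f * P) ξ := rfl
    rw [h', h]
  have hC : ⟪ξ, P ξ⟫ = ⟪P ξ, P ξ⟫ := by
    have hmv := inner_op_move P ξ (P ξ)
    rw [hPs] at hmv
    rw [hPP] at hmv
    exact hmv.symm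
  have hD : ‖f (P ξ)‖ ^ 2 = ‖P ξ‖ ^ 2 := by
    rw [norm_apply_sq f (P ξ), hfs, hf2]
    calc RCLike.re ⟪P ξ, f (P ξ)⟫ = RCLike.re ⟪ξ, P ξ⟫ := by rw [hB]
      _ = RCLike.re ⟪P ξ, P ξ⟫ := by rw [hC]
      _ = ‖P ξ‖ ^ 2 := inner_self_eq_norm_sq _
  have hA : RCLike.re ⟪f (P ξ), P ξ⟫ = ‖P ξ‖ ^ 2 := by
    have hmv := inner_op_move f (P ξ) (P ξ)
    rw [hfs] at hmv
    rw [hmv, hB, hC, inner_self_eq_norm_sq]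
  have hsub : ‖f (P ξ) - P ξ‖ ^ 2 = 0 := by
    rw [norm_sub_sq (𝕜 := ℂ), hA, hD]
    ring
  have hz : f (P ξ) - P ξ = 0 := by
    have h0 := (pow_eq_zero_iff (n := 2) (by norm_num)).1 hsub
    rwa [norm_eq_zero] at h0
  rwa [sub_eq_zero] at hz
  
section CfC

open scoped ComplexOrder

/-- If `a` is a contraction admitting the face-amplification property,
then `a` is a partial isometry. -/
lemma pi_of_chain {a : E →L[ℂ] E} (ha1 : ‖a‖ ≤ 1)
    (amp : ∀ τ : ℝ, ‖a + a * ((2⁻¹:ℝ) • (1 - star a * a))‖ ≤ 1 →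
      ‖a - a * ((2⁻¹:ℝ) • (1 - star a * a))‖ ≤ 1 →
      |τ| * ‖a * ((2⁻¹:ℝ) • (1 - star a * a))‖ ≤ 1 →
      ‖a + (τ:ℂ) • (a * ((2⁻¹:ℝ) • (1 - star a * a)))‖ ≤ 1) :
    a * star a * a = a := by
  rcases subsingleton_or_nontrivial E with hE | hE
  · exact ContinuousLinearMap.ext fun ξ => Subsingleton.elim _ _
  set A' : E →L[ℂ] E := star a * a with hA'
  have hA'sa : IsSelfAdjoint A' := IsSelfAdjoint.star_mul_self a
  by_contra hnot
  -- Step 1 : A' is not idempotent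
  have hAA : A' * A' ≠ A' := by
    intro hAA
    apply hnot
    have hstar : star (a * A' - a) = A' * star a - star a := by
      rw [star_sub, star_mul, hA'sa.star_eq]
    have hzero : star (a * A' - a) * (a * A' - a) = 0 := by
      rw [hstar]
      have e1 : (A' * star a) * (a * A') = A' * A' * A' := by
        rw [hA']; noncomm_ring
      have e2 : (A' * star a) * a = A' * A' := by rw [hA']; noncomm_ring
      have e3 : star a * (a * A') = A' * A' := by rw [hA']; noncomm_ring
      calc (A' * star a - star a) * (a * A' - a)
          = (A' * star a) * (a * A') - (A' * star a) * a - star a * (a * A') + star a * a := by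
            noncomm_ring
        _ = A' * A' * A' - A' * A' - A' * A' + A' := by rw [e1, e2, e3, ← hA']
        _ = 0 := by simp only [hAA]; abel
    have hn := CStarRing.norm_star_mul_self (x := a * A' - a)
    rw [hzero, norm_zero] at hn
    have h0 : ‖a * A' - a‖ = 0 := by nlinarith [norm_nonneg (a * A' - a)]
    have h1 : a * A' = a := by
      rw [norm_eq_zero, sub_eq_zero] at h0
      exact h0
    rw [← mul_assoc] at h1
    exact h1
  -- instance bookkeeping
  have hnt : Nontrivial (E →L[ℂ] E) := by
    refine ⟨1, 0, ?_⟩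
    intro h
    have h1 : ‖(1 : E →L[ℂ] E)‖ = 1 := norm_one
    rw [h, norm_zero] at h1
    norm_num at h1
  -- Step 2 : basic spectral facts
  have hA'nonneg : (0 : E →L[ℂ] E) ≤ A' := star_mul_self_nonneg a
  have hspec0 : ∀ t ∈ spectrum ℝ A', 0 ≤ t := fun t ht =>
    spectrum_nonneg_of_nonneg hA'nonneg ht
  have hA'norm : ‖A'‖ ≤ 1 := by
    have h := CStarRing.norm_star_mul_self (x := a)
    rw [← hA'] at h
    nlinarith [norm_nonneg a]
  have hspec1 : ∀ t ∈ spectrum ℝ A', t ≤ 1 := by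
    intro t ht
    have h := spectrum.norm_le_norm_of_mem (𝕜 := ℝ) ht
    rw [Real.norm_eq_abs] at h
    calc t ≤ |t| := le_abs_self t
      _ ≤ ‖A'‖ := h
      _ ≤ 1 := hA'norm
  -- Step 3 : a spectral value strictly between 0 and 1
  have hexists : ∃ μ ∈ spectrum ℝ A', μ * μ ≠ μ := by
    by_contra hall
    push_neg at hall
    apply hAA
    have h1 : cfc (fun t : ℝ => t * t) A' = cfc (fun t : ℝ => t) A' :=
      cfc_congr fun t ht => hall t ht
    have h2 : cfc (fun t : ℝ => t * t) A' = A' * A' := by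
      rw [cfc_mul (fun t : ℝ => t) (fun t : ℝ => t) A', cfc_id' ℝ A']
    have h3 : cfc (fun t : ℝ => t) A' = A' := cfc_id' ℝ A'
    rw [h2, h3] at h1
    exact h1
  obtain ⟨μ, hμspec, hμne⟩ := hexists
  have hμ0 : 0 < μ := by
    rcases lt_or_eq_of_le (hspec0 μ hμspec) with h | h
    · exact h
    · exact absurd (by rw [← h]; ring) hμne
  have hμ1 : μ < 1 := by
    rcases lt_or_eq_of_le (hspec1 μ hμspec) with h | h
    · exact h
    · exact absurd (by rw [h]; ring) hμne
  -- Step 4 : set-up of the perturbing element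
  set b : ℝ → ℝ := fun t => (1 - t) / 2 with hb
  set B : E →L[ℂ] E := (2⁻¹:ℝ) • (1 - A') with hBdef
  have hBeq : B = cfc b A' := by
    have h1 : cfc b A' = cfc (fun t : ℝ => (2⁻¹:ℝ) • (1 - t)) A' := by
      congr 1
      funext t
      simp only [hb, smul_eq_mul]
      ring
    have h2 : cfc (fun t : ℝ => (2⁻¹:ℝ) • (1 - t)) A' = (2⁻¹:ℝ) • cfc (fun t : ℝ => 1 - t) A' :=
      cfc_smul (2⁻¹:ℝ) (fun t : ℝ => 1 - t) A'
    have h3 : cfc (fun t : ℝ => 1 - t) A' = 1 - A' := by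
      rw [cfc_sub (fun _ : ℝ => (1:ℝ)) (fun t : ℝ => t) A' continuous_const.continuousOn
        continuous_id.continuousOn, cfc_id' ℝ A', cfc_const (1:ℝ) A' hA'sa, map_one]
    rw [h1, h2, h3]
  have hcb : Continuous b := by rw [hb]; fun_prop
  set w : E →L[ℂ] E := a * B with hw
  -- quadratic form computation
  have hquad : ∀ f : ℝ → ℝ, Continuous f →
      star (a * cfc f A') * (a * cfc f A') = cfc (fun t => f t * (t * f t)) A' := by
    intro f hf
    set D := cfc f A' with hD
    have hDsa : IsSelfAdjoint D := cfc_predicate f A'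
    have h1 : star (a * D) * (a * D) = D * (A' * D) := by
      rw [star_mul, hDsa.star_eq]
      calc D * star a * (a * D) = D * ((star a * a) * D) := by noncomm_ring
        _ = D * (A' * D) := by rw [← hA']
    rw [h1]
    have h2 : cfc (fun x : ℝ => x * f x) A' = A' * cfc f A' := by
      have h := cfc_mul (fun t : ℝ => t) f A' continuous_id.continuousOn hf.continuousOn
      rw [cfc_id' ℝ A'] at h
      exact h
    rw [hD, ← h2]
    exact (cfc_mul f (fun t : ℝ => t * f t) A' hf.continuousOn
      ((continuous_id.mul hf).continuousOn)).symm
  -- admissibility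
  have hCeq : ∀ σ : ℝ, (1 : E →L[ℂ] E) + (σ:ℝ) • B = cfc (fun t => 1 + σ * b t) A' := by
    intro σ
    have h1 : cfc (fun t => 1 + σ * b t) A'
        = cfc (fun _ : ℝ => (1:ℝ)) A' + cfc (fun t : ℝ => σ * b t) A' :=
      cfc_add (a := A') (fun _ : ℝ => (1:ℝ)) (fun t : ℝ => σ * b t)
        continuous_const.continuousOn ((continuous_const.mul hcb).continuousOn)
    have h2 : cfc (fun _ : ℝ => (1:ℝ)) A' = 1 := by
      rw [cfc_const (1:ℝ) A' hA'sa, map_one]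
    have h3 : cfc (fun t : ℝ => σ * b t) A' = σ • cfc b A' :=
      cfc_const_mul σ b A' hcb.continuousOn
    rw [h1, h2, h3, ← hBeq]
  have hfactor : ∀ σ : ℝ, a + (σ:ℂ) • w = a * ((1 : E →L[ℂ] E) + (σ:ℝ) • B) := by
    intro σ
    rw [mul_add, mul_one]
    congr 1
    rw [mul_smul_comm, ← hw, Complex.coe_smul]
  have hadm : ∀ σ : ℝ, (∀ t ∈ spectrum ℝ A', (1 + σ * b t) * (t * (1 + σ * b t)) ≤ 1) →
      ‖a + (σ:ℂ) • w‖ ≤ 1 := by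
    intro σ hbnd
    have hx := hfactor σ
    have hcont : Continuous (fun t => 1 + σ * b t) :=
      continuous_const.add (continuous_const.mul hcb)
    have hq := hquad (fun t => 1 + σ * b t) hcont
    rw [← hCeq σ] at hq
    have hnorm : ‖star (a + (σ:ℂ) • w) * (a + (σ:ℂ) • w)‖ ≤ 1 := by
      rw [hx, hq]
      apply norm_cfc_le zero_le_one
      intro t ht
      have h1 : (1 + σ * b t) * (t * (1 + σ * b t)) ≤ 1 := hbnd t ht
      have h0 : 0 ≤ (1 + σ * b t) * (t * (1 + σ * b t)) := by
        have := hspec0 t ht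
        nlinarith [sq_nonneg (1 + σ * b t)]
      show ‖(1 + σ * b t) * (t * (1 + σ * b t))‖ ≤ 1
      rw [Real.norm_eq_abs, abs_le]
      exact ⟨by linarith, h1⟩
    have hcs := CStarRing.norm_star_mul_self (x := a + (σ:ℂ) • w)
    nlinarith [norm_nonneg (a + (σ:ℂ) • w)]
  -- the two admissibility bounds
  have hplus : ‖a + w‖ ≤ 1 := by
    have hbound : ∀ t ∈ spectrum ℝ A', (1 + (1:ℝ) * b t) * (t * (1 + (1:ℝ) * b t)) ≤ 1 := by
      intro t ht
      have ht0 := hspec0 t ht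
      have ht1 := hspec1 t ht
      have hkey : 0 ≤ (1 - t)^2 * (4 - t) := by
        apply mul_nonneg (sq_nonneg _)
        linarith
      simp only [hb, one_mul]
      nlinarith [hkey]
    have h := hadm 1 hbound
    simpa using h
  have hminus : ‖a - w‖ ≤ 1 := by
    have hbound : ∀ t ∈ spectrum ℝ A', (1 + (-1:ℝ) * b t) * (t * (1 + (-1:ℝ) * b t)) ≤ 1 := by
      intro t ht
      have ht0 := hspec0 t ht
      have ht1 := hspec1 t ht
      simp only [hb, neg_one_mul]
      nlinarith [sq_nonneg (1 + t)]
    have h := hadm (-1) hbound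
    have h' : a + ((-1:ℝ):ℂ) • w = a - w := by
      push_cast
      rw [neg_one_smul]
      abel
    rwa [h'] at h
  -- norm of w
  have hwsq : star w * w = cfc (fun t => b t * (t * b t)) A' := by
    have := hquad b hcb
    rw [← hBeq] at this
    exact this
  obtain ⟨⟨tstar, htstar_spec, htstar_val⟩, hub⟩ :=
    IsGreatest.norm_cfc (fun t => b t * (t * b t)) A'
      ((hcb.mul (continuous_id.mul hcb)).continuousOn) hA'sa
  have hcs_w := CStarRing.norm_star_mul_self (x := w)
  have htstar_val' : |b tstar * (tstar * b tstar)| = ‖w‖ * ‖w‖ := by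
    have h := htstar_val
    simp only [Real.norm_eq_abs] at h
    rw [← hwsq, hcs_w] at h
    exact h
  have hμ_le : |b μ * (μ * b μ)| ≤ ‖w‖ * ‖w‖ := by
    have h := norm_apply_le_norm_cfc (fun t => b t * (t * b t)) A' hμspec
      ((hcb.mul (continuous_id.mul hcb)).continuousOn) hA'sa
    simp only [Real.norm_eq_abs] at h
    rw [← hwsq, hcs_w] at h
    exact h
  have hμval_pos : 0 < b μ * (μ * b μ) := by
    simp only [hb]
    have h1 : 0 < (1 - μ)/2 := by linarith
    exact mul_pos h1 (mul_pos hμ0 h1)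
  have hw_pos : 0 < ‖w‖ := by
    nlinarith [abs_nonneg (b μ * (μ * b μ)), le_abs_self (b μ * (μ * b μ)), norm_nonneg w]
  set m := ‖w‖ with hm
  have ht0 : 0 ≤ tstar := hspec0 tstar htstar_spec
  have ht1 : tstar ≤ 1 := hspec1 tstar htstar_spec
  have hbt_nonneg : 0 ≤ b tstar := by simp only [hb]; linarith
  have htval : b tstar * (tstar * b tstar) = m * m := by
    rw [← htstar_val']
    rw [abs_of_nonneg]
    positivity
  have htstar_pos : 0 < tstar := by
    rcases lt_or_eq_of_le ht0 with h | h
    · exact h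
    · exfalso
      have : b tstar * (tstar * b tstar) = 0 := by rw [← h]; ring
      nlinarith
  have hbt_pos : 0 < b tstar := by
    rcases lt_or_eq_of_le hbt_nonneg with h | h
    · exact h
    · exfalso
      have : b tstar * (tstar * b tstar) = 0 := by rw [← h]; ring
      nlinarith
  -- apply the amplification
  have hamp := amp m⁻¹ hplus hminus ?_
  swap
  · rw [abs_of_nonneg (by positivity)]
    rw [inv_mul_cancel₀ (ne_of_gt hw_pos)]
  -- lower bound on the amplified element
  have hcont_c : Continuous (fun t => 1 + m⁻¹ * b t) :=
    continuous_const.add (continuous_const.mul hcb)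
  have hq := hquad (fun t => 1 + m⁻¹ * b t) hcont_c
  rw [← hCeq m⁻¹] at hq
  have hxfac := hfactor m⁻¹
  have hlow : (1 + m⁻¹ * b tstar) * (tstar * (1 + m⁻¹ * b tstar)) ≤ 1 := by
    have h := norm_apply_le_norm_cfc (fun t => (1 + m⁻¹ * b t) * (t * (1 + m⁻¹ * b t))) A'
      htstar_spec ((hcont_c.mul (continuous_id.mul hcont_c)).continuousOn) hA'sa
    rw [Real.norm_eq_abs] at h
    have hle : |(1 + m⁻¹ * b tstar) * (tstar * (1 + m⁻¹ * b tstar))|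
        ≤ ‖star (a + ((m⁻¹:ℝ):ℂ) • w) * (a + ((m⁻¹:ℝ):ℂ) • w)‖ := by
      rw [hxfac, hq]
      exact h
    have hcs := CStarRing.norm_star_mul_self (x := a + ((m⁻¹:ℝ):ℂ) • w)
    have hnrm : ‖a + ((m⁻¹:ℝ):ℂ) • w‖ ≤ 1 := hamp
    calc (1 + m⁻¹ * b tstar) * (tstar * (1 + m⁻¹ * b tstar))
        ≤ |(1 + m⁻¹ * b tstar) * (tstar * (1 + m⁻¹ * b tstar))| := le_abs_self _
      _ ≤ ‖star (a + ((m⁻¹:ℝ):ℂ) • w) * (a + ((m⁻¹:ℝ):ℂ) • w)‖ := hle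
      _ = ‖a + ((m⁻¹:ℝ):ℂ) • w‖ * ‖a + ((m⁻¹:ℝ):ℂ) • w‖ := hcs
      _ ≤ 1 := by nlinarith [norm_nonneg (a + ((m⁻¹:ℝ):ℂ) • w)]
  -- derive the contradiction
  have hminv : m * m⁻¹ = 1 := mul_inv_cancel₀ (ne_of_gt hw_pos)
  have hsq : m⁻¹ * m⁻¹ * (b tstar * (tstar * b tstar)) = 1 := by
    rw [htval]
    field_simp
  nlinarith [mul_pos (mul_pos htstar_pos hbt_pos) (inv_pos.mpr hw_pos), hlow, hsq,
    mul_pos htstar_pos hbt_pos, inv_pos.mpr hw_pos]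

end CfC

section RingHelpers

variable {R : Type*} [Ring R]

lemma corner_left {p x : R} (hp2 : p * p = p) (hx : p * x * (1 - p) = x) : p * x = x := by
  conv_lhs => rw [← hx]
  calc p * (p * x * (1 - p)) = (p * p) * x * (1 - p) := by noncomm_ring
    _ = p * x * (1 - p) := by rw [hp2]
    _ = x := hx

lemma corner_right {p x : R} (hp2 : p * p = p) (hx : p * x * (1 - p) = x) : x * (1 - p) = x := by
  conv_lhs => rw [← hx]
  have h1 : (1 - p) * (1 - p) = 1 - p - p + p * p := by noncomm_ring
  rw [hp2] at h1
  have h2 : (1 - p) * (1 - p) = 1 - p := by rw [h1]; abel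
  calc p * x * (1 - p) * (1 - p) = p * x * ((1 - p) * (1 - p)) := by noncomm_ring
    _ = p * x * (1 - p) := by rw [h2]
    _ = x := hx

lemma compl_idem {e : R} (he : e * e = e) : (1 - e) * (1 - e) = 1 - e := by
  have h1 : (1 - e) * (1 - e) = 1 - e - e + e * e := by noncomm_ring
  rw [he] at h1
  rw [h1]; abel

end RingHelpers


end SubprojAux

open SubprojAux in
theorem subprojection_pullback
    (M : VonNeumannAlgebra H) (N : VonNeumannAlgebra K)
    (p : H →L[ℂ] H) (q : K →L[ℂ] K)
    (hp : IsVNProjection M p) (hq : IsVNProjection N q)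
    (hpc : HasFullCentralSupport M p) (hpc' : HasFullCentralSupport M (1 - p))
    (hqc : HasFullCentralSupport N q) (hqc' : HasFullCentralSupport N (1 - q))
    (T : offCorner M p ≃ₗᵢ[ℂ] offCorner N q)
    (u : offCorner M p)
    (hu : (u : H →L[ℂ] H) * star (u : H →L[ℂ] H) * (u : H →L[ℂ] H) = (u : H →L[ℂ] H))
    (e : K →L[ℂ] K) (he : IsVNProjection N e)
    (hle : (T u : K →L[ℂ] K) * star (T u : K →L[ℂ] K) * e = e) :
    ∃ e₀ : H →L[ℂ] H, IsVNProjection M e₀ ∧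
      (u : H →L[ℂ] H) * star (u : H →L[ℂ] H) * e₀ = e₀ ∧
      ∃ w : offCorner M p, (w : H →L[ℂ] H) = e₀ * (u : H →L[ℂ] H) ∧
        (T w : K →L[ℂ] K) = e * (T u : K →L[ℂ] K) := by
  classical
  obtain ⟨hpM, hp2, hps⟩ := hp
  obtain ⟨hqM, hq2, hqs⟩ := hq
  obtain ⟨heN, he2, hes⟩ := he
  obtain ⟨huM, hup⟩ := u.2
  set uc : H →L[ℂ] H := (u : H →L[ℂ] H) with huc
  set v : K →L[ℂ] K := (T u : K →L[ℂ] K) with hvdef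
  obtain ⟨hvN, hvq⟩ := (T u).2
  rw [← hvdef] at hvq
  have hqv : q * v = v := corner_left hq2 hvq
  have hv1q : v * (1 - q) = v := corner_right hq2 hvq
  -- `e` is absorbed by the range projection of `v` on both sides
  have hvve : v * star v * e = e := hle
  have hevv : e * (v * star v) = e := by
    have h := congrArg star hvve
    rw [star_mul, star_mul, star_star, hes] at h
    calc e * (v * star v) = e * v * star v := by noncomm_ring
      _ = e := h
  -- the partial isometry s = e * v
  set s : K →L[ℂ] K := e * v with hsdef
  have hstars : star s = star v * e := by rw [hsdef, star_mul, hes]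
  have hss : s * star s = e := by
    rw [hsdef, hstars]
    calc (e * v) * (star v * e) = (e * (v * star v)) * e := by noncomm_ring
      _ = e * e := by rw [hevv]
      _ = e := he2
  have hspi : s * star s * s = s := by
    rw [hss, hsdef]
    calc e * (e * v) = (e * e) * v := by noncomm_ring
      _ = e * v := by rw [he2]
  -- membership of s in the corner
  have hvsq : star v * q = star v := by
    have h := congrArg star hqv
    rwa [star_mul, hqs] at h
  have heq' : e * q = e := by
    calc e * q = (e * (v * star v)) * q := by rw [hevv]
      _ = e * (v * (star v * q)) := by noncomm_ring
      _ = e * (v * star v) := by rw [hvsq]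
      _ = e := hevv
  have hqe : q * e = e := by
    have h := congrArg star heq'
    rwa [star_mul, hes, hqs] at h
  have hsmem : s ∈ offCorner N q := by
    refine ⟨mul_mem heN hvN, ?_⟩
    calc q * (e * v) * (1 - q) = (q * e) * (v * (1 - q)) := by noncomm_ring
      _ = e * v := by rw [hqe, hv1q]
  set sSub : offCorner N q := ⟨s, hsmem⟩ with hsSub
  set aSub : offCorner M p := T.symm sSub with haSub
  set a : H →L[ℂ] H := (aSub : H →L[ℂ] H) with hadef
  obtain ⟨haM, hap⟩ := aSub.2
  rw [← hadef] at hap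
  have hTa : T aSub = sSub := T.apply_symm_apply sSub
  -- norms
  have hu1 : ‖uc‖ ≤ 1 := pi_norm_le_one hu
  have hnormT : ∀ x : offCorner M p, ‖(T x : K →L[ℂ] K)‖ = ‖(x : H →L[ℂ] H)‖ := by
    intro x
    have h := T.norm_map x
    rwa [Submodule.coe_norm, Submodule.coe_norm] at h
  have hv1 : ‖v‖ ≤ 1 := by
    rw [hvdef, hnormT u]
    exact hu1
  have he_norm : ‖e‖ ≤ 1 := proj_norm_le_one he2 hes
  have hs1 : ‖s‖ ≤ 1 := pi_norm_le_one hspi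
  have ha1 : ‖a‖ ≤ 1 := by
    have h : ‖(aSub : H →L[ℂ] H)‖ = ‖s‖ := by
      rw [← hnormT aSub, hTa]
    rw [hadef, h]
    exact hs1
  -- Face property on the Y side
  have hface : ∀ y₁ y₂ : K →L[ℂ] K, ‖y₁‖ ≤ 1 → ‖y₂‖ ≤ 1 → y₁ + y₂ = s + s →
      (s * star s) * y₁ * (star s * s) = s := by
    intro y₁ y₂ h1 h2 hsum
    have hecn : ‖s * star s‖ ≤ 1 := proj_norm_le_one (pi_e_idem hspi) pi_e_sa
    have hgcn : ‖star s * s‖ ≤ 1 := proj_norm_le_one (pi_g_idem hspi) pi_g_sa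
    have hm1 : ‖(s * star s) * y₁ * (star s * s)‖ ≤ 1 := by
      calc ‖(s * star s) * y₁ * (star s * s)‖
          ≤ ‖(s * star s) * y₁‖ * ‖star s * s‖ := norm_mul_le _ _
        _ ≤ ‖s * star s‖ * ‖y₁‖ * ‖star s * s‖ := by gcongr; exact norm_mul_le _ _
        _ ≤ 1 * 1 * 1 := by gcongr
        _ = 1 := by norm_num
    have hm2 : ‖(s * star s) * y₂ * (star s * s)‖ ≤ 1 := by
      calc ‖(s * star s) * y₂ * (star s * s)‖
          ≤ ‖(s * star s) * y₂‖ * ‖star s * s‖ := norm_mul_le _ _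
        _ ≤ ‖s * star s‖ * ‖y₂‖ * ‖star s * s‖ := by gcongr; exact norm_mul_le _ _
        _ ≤ 1 * 1 * 1 := by gcongr
        _ = 1 := by norm_num
    have hmsum : (s * star s) * y₁ * (star s * s) + (s * star s) * y₂ * (star s * s)
        = s + s := by
      calc (s * star s) * y₁ * (star s * s) + (s * star s) * y₂ * (star s * s)
          = (s * star s) * (y₁ + y₂) * (star s * s) := by noncomm_ring
        _ = (s * star s) * (s + s) * (star s * s) := by rw [hsum]
        _ = (s * star s * s) * (star s * s) + (s * star s * s) * (star s * s) := by
            noncomm_ring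
        _ = s * (star s * s) + s * (star s * s) := by rw [hspi]
        _ = s + s := by rw [pi_sg hspi]
    have hmid := (midpoint_eq_on_initial hspi hm1 hm2 hmsum).1
    have habsorb : ((s * star s) * y₁ * (star s * s)) * (star s * s)
        = (s * star s) * y₁ * (star s * s) := by
      calc ((s * star s) * y₁ * (star s * s)) * (star s * s)
          = (s * star s) * y₁ * ((star s * s) * (star s * s)) := by noncomm_ring
        _ = (s * star s) * y₁ * (star s * s) := by rw [pi_g_idem hspi]
    rw [← habsorb]
    exact hmid
  -- P1 : facial decomposition
  have hP1 : ∀ y : K →L[ℂ] K, ‖y‖ ≤ 1 → (s * star s) * y * (star s * s) = s →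
      star s * (y - s) = 0 ∧ (y - s) * (star s * s) = 0 ∧ ‖y - s‖ ≤ 1 := by
    intro y hy hc
    obtain ⟨hyg, hey⟩ := corner_lemma hy hspi hc
    refine ⟨?_, ?_, ?_⟩
    · have h1 : star s * y = star s * s := by
        calc star s * y = (star s * s * star s) * y := by rw [pi_star hspi]
          _ = star s * ((s * star s) * y) := by noncomm_ring
          _ = star s * s := by rw [hey]
      rw [mul_sub, h1, sub_self]
    · rw [sub_mul, hyg, pi_sg hspi, sub_self]
    · have hzform : y - s = (1 - s * star s) * y * (1 - star s * s) := by
        have hexp : (1 - s * star s) * y * (1 - star s * s)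
            = y - y * (star s * s) - (s * star s) * y + (s * star s) * y * (star s * s) := by
          noncomm_ring
        rw [hexp, hyg, hc, hey]
        abel
      have hcne : ‖(1 : K →L[ℂ] K) - s * star s‖ ≤ 1 :=
        proj_norm_le_one (compl_idem (pi_e_idem hspi))
          (by rw [star_sub, star_one, pi_e_sa])
      have hcng : ‖(1 : K →L[ℂ] K) - star s * s‖ ≤ 1 :=
        proj_norm_le_one (compl_idem (pi_g_idem hspi))
          (by rw [star_sub, star_one, pi_g_sa])
      rw [hzform]
      calc ‖(1 - s * star s) * y * (1 - star s * s)‖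
          ≤ ‖(1 - s * star s) * y‖ * ‖1 - star s * s‖ := norm_mul_le _ _
        _ ≤ ‖1 - s * star s‖ * ‖y‖ * ‖1 - star s * s‖ := by gcongr; exact norm_mul_le _ _
        _ ≤ 1 * 1 * 1 := by gcongr
        _ = 1 := by norm_num
  -- the chain lemma
  have chain : ∀ w : H →L[ℂ] H, w ∈ offCorner M p → ‖a + w‖ ≤ 1 → ‖a - w‖ ≤ 1 →
      ∀ τ : ℝ, |τ| * ‖w‖ ≤ 1 → ‖a + (τ:ℂ) • w‖ ≤ 1 := by
    intro w hw hplus hminus τ hτ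
    set wS : offCorner M p := ⟨w, hw⟩ with hwS
    set z : K →L[ℂ] K := (T wS : K →L[ℂ] K) with hz
    have hXp : T (aSub + wS) = sSub + T wS := by rw [map_add, hTa]
    have hXm : T (aSub - wS) = sSub - T wS := by rw [map_sub, hTa]
    have hz1 : ‖s + z‖ ≤ 1 := by
      calc ‖s + z‖ = ‖((sSub + T wS : offCorner N q) : K →L[ℂ] K)‖ := by
            rw [Submodule.coe_add]
        _ = ‖(T (aSub + wS) : K →L[ℂ] K)‖ := by rw [hXp]
        _ = ‖((aSub + wS : offCorner M p) : H →L[ℂ] H)‖ := hnormT _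
        _ = ‖a + w‖ := by rw [Submodule.coe_add]
        _ ≤ 1 := hplus
    have hz2 : ‖s - z‖ ≤ 1 := by
      calc ‖s - z‖ = ‖((sSub - T wS : offCorner N q) : K →L[ℂ] K)‖ := by
            rw [Submodule.coe_sub]
        _ = ‖(T (aSub - wS) : K →L[ℂ] K)‖ := by rw [hXm]
        _ = ‖((aSub - wS : offCorner M p) : H →L[ℂ] H)‖ := hnormT _
        _ = ‖a - w‖ := by rw [Submodule.coe_sub]
        _ ≤ 1 := hminus
    have hcf := hface (s + z) (s - z) hz1 hz2 (by abel)
    have hzf := hP1 (s + z) hz1 hcf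
    rw [add_sub_cancel_left] at hzf
    obtain ⟨hz_e, hz_g, _⟩ := hzf
    have hz_e' : star s * ((τ:ℂ) • z) = 0 := by rw [mul_smul_comm, hz_e, smul_zero]
    have hz_g' : ((τ:ℂ) • z) * (star s * s) = 0 := by rw [smul_mul_assoc, hz_g, smul_zero]
    have hzw : ‖z‖ = ‖w‖ := by
      rw [hz, hnormT wS]
    have hz_n : ‖(τ:ℂ) • z‖ ≤ 1 := by
      rw [norm_smul, Complex.norm_real, Real.norm_eq_abs, hzw]
      exact hτ
    have hfin := orth_sum_norm hs1 hz_n hspi hz_e' hz_g'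
    have hX2 : T (aSub + (τ:ℂ) • wS) = sSub + (τ:ℂ) • T wS := by
      rw [map_add, map_smul, hTa]
    calc ‖a + (τ:ℂ) • w‖ = ‖((aSub + (τ:ℂ) • wS : offCorner M p) : H →L[ℂ] H)‖ := by
          rw [Submodule.coe_add, Submodule.coe_smul]
      _ = ‖(T (aSub + (τ:ℂ) • wS) : K →L[ℂ] K)‖ := (hnormT _).symm
      _ = ‖((sSub + (τ:ℂ) • T wS : offCorner N q) : K →L[ℂ] K)‖ := by rw [hX2]
      _ = ‖s + (τ:ℂ) • z‖ := by rw [Submodule.coe_add, Submodule.coe_smul]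
      _ ≤ 1 := hfin
  -- v belongs to the face of s
  have hgv : star s * s = star v * (e * v) := by
    rw [hstars, hsdef]
    calc (star v * e) * (e * v) = star v * ((e * e) * v) := by noncomm_ring
      _ = star v * (e * v) := by rw [he2]
  have hvface : (s * star s) * v * (star s * s) = s := by
    rw [hss, hgv]
    calc e * v * (star v * (e * v)) = (e * (v * star v)) * (e * v) := by noncomm_ring
      _ = e * (e * v) := by rw [hevv]
      _ = (e * e) * v := by noncomm_ring
      _ = e * v := by rw [he2]
      _ = s := hsdef.symm
  obtain ⟨ht_e, ht_g, ht_n⟩ := hP1 v hv1 hvface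
  -- the bound ‖2a - u‖ ≤ 1
  have hβY : ‖s + -(v - s)‖ ≤ 1 := by
    refine orth_sum_norm hs1 ?_ hspi ?_ ?_
    · rw [norm_neg]; exact ht_n
    · rw [mul_neg, ht_e, neg_zero]
    · rw [neg_mul, ht_g, neg_zero]
  have hβ : ‖a + a - uc‖ ≤ 1 := by
    have hX3 : T (aSub + aSub - u) = sSub + sSub - T u := by rw [map_sub, map_add, hTa]
    have hYeq : s + s - v = s + -(v - s) := by abel
    calc ‖a + a - uc‖ = ‖((aSub + aSub - u : offCorner M p) : H →L[ℂ] H)‖ := by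
          rw [Submodule.coe_sub, Submodule.coe_add]
      _ = ‖(T (aSub + aSub - u) : K →L[ℂ] K)‖ := (hnormT _).symm
      _ = ‖((sSub + sSub - T u : offCorner N q) : K →L[ℂ] K)‖ := by rw [hX3]
      _ = ‖s + s - v‖ := by rw [Submodule.coe_sub, Submodule.coe_add]
      _ = ‖s + -(v - s)‖ := by rw [hYeq]
      _ ≤ 1 := hβY
  -- a is a partial isometry
  have hpa : p * a = a := corner_left hp2 hap
  have hanp : a * (1 - p) = a := corner_right hp2 hap
  have hwmem : a * ((2⁻¹:ℝ) • (1 - star a * a)) ∈ offCorner M p := by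
    constructor
    · have h1 : (2⁻¹:ℝ) • ((1 : H →L[ℂ] H) - star a * a)
          = ((2⁻¹:ℝ):ℂ) • ((1 : H →L[ℂ] H) - star a * a) := (Complex.coe_smul _ _).symm
      rw [h1]
      have h2 : ((2⁻¹:ℝ):ℂ) • ((1 : H →L[ℂ] H) - star a * a)
          = algebraMap ℂ (H →L[ℂ] H) ((2⁻¹:ℝ):ℂ) * ((1 : H →L[ℂ] H) - star a * a) := by
        rw [Algebra.smul_def]
      rw [h2]
      exact mul_mem haM (mul_mem (M.toStarSubalgebra.algebraMap_mem _)
        (sub_mem (one_mem M) (mul_mem (star_mem haM) haM)))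
    · have hA'np : (star a * a) * (1 - p) = star a * a := by
        rw [mul_assoc, hanp]
      have hB1p : ((2⁻¹:ℝ) • ((1:H →L[ℂ] H) - star a * a)) * (1 - p)
          = (2⁻¹:ℝ) • ((1 - p) - star a * a) := by
        rw [smul_mul_assoc, sub_mul, one_mul, hA'np]
      calc p * (a * ((2⁻¹:ℝ) • (1 - star a * a))) * (1 - p)
          = (p * a) * (((2⁻¹:ℝ) • ((1:H →L[ℂ] H) - star a * a)) * (1 - p)) := by
            noncomm_ring
        _ = a * ((2⁻¹:ℝ) • ((1 - p) - star a * a)) := by rw [hpa, hB1p]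
        _ = (2⁻¹:ℝ) • (a * (1 - p) - a * (star a * a)) := by
            rw [mul_smul_comm, mul_sub]
        _ = (2⁻¹:ℝ) • (a - a * (star a * a)) := by rw [hanp]
        _ = a * ((2⁻¹:ℝ) • (1 - star a * a)) := by
            rw [mul_smul_comm, mul_sub, mul_one]
  have key : a * star a * a = a := by
    refine pi_of_chain ha1 ?_
    intro τ h1 h2 h3
    exact chain _ hwmem h1 h2 τ h3
  -- u agrees with a on the support of a
  have hmid := (midpoint_eq_on_initial key hu1 hβ (by abel)).1
  -- hmid : uc * (star a * a) = a
  set P : H →L[ℂ] H := star a * a with hPdef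
  have hP2' : P * P = P := pi_g_idem key
  have hPs : star P = P := pi_g_sa
  have hf2 : (star uc * uc) * (star uc * uc) = star uc * uc := pi_g_idem hu
  have hfs : star (star uc * uc) = star uc * uc := pi_g_sa
  have hPfP : P * (star uc * uc) * P = P := by
    have h1 : star a * a = P * (star uc * uc) * P := by
      calc star a * a = star (uc * P) * (uc * P) := by rw [hmid]
        _ = (star P * star uc) * (uc * P) := by rw [star_mul]
        _ = P * (star uc * uc) * P := by rw [hPs]; noncomm_ring
    exact h1.symm
  have hfP : (star uc * uc) * P = P := proj_absorb hf2 hfs hP2' hPs hPfP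
  have hPf : P * (star uc * uc) = P := by
    have h := congrArg star hfP
    rwa [star_mul, hfs, hPs] at h
  have he₀form : a * star a = uc * (P * star uc) := by
    calc a * star a = (uc * P) * star (uc * P) := by rw [hmid]
      _ = (uc * P) * (star P * star uc) := by rw [star_mul]
      _ = uc * ((P * P) * star uc) := by rw [hPs]; noncomm_ring
      _ = uc * (P * star uc) := by rw [hP2']
  have he₀_idem : (a * star a) * (a * star a) = a * star a := pi_e_idem key
  have he₀_sa : star (a * star a) = a * star a := pi_e_sa
  have huue₀ : uc * star uc * (a * star a) = a * star a := by
    calc uc * star uc * (a * star a) = uc * star uc * (uc * (P * star uc)) := by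
          rw [he₀form]
      _ = (uc * star uc * uc) * (P * star uc) := by noncomm_ring
      _ = uc * (P * star uc) := by rw [hu]
      _ = a * star a := he₀form.symm
  have he₀u : (a * star a) * uc = a := by
    calc (a * star a) * uc = uc * (P * (star uc * uc)) := by rw [he₀form]; noncomm_ring
      _ = uc * P := by rw [hPf]
      _ = a := hmid
  refine ⟨a * star a, ⟨mul_mem haM (star_mem haM), he₀_idem, he₀_sa⟩, huue₀, aSub,
    he₀u.symm, ?_⟩
  rw [hTa]
end
end
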